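/- arXiv:1701.01072 — 8 statements merged into one kernel-verified Lean document; each statement's English description precedes it below -/
import Mathlib

section
/- For arbitrary N≥2 self-adjoint operators A_1,…,A_N on a finite-dimensional complex Hilbert space and unit vector ψ, the sum of variances satisfies: Σ_{i=1}^N Var(A_i) ≥ (1/N)·Var(Σ_{i=1}^N A_i) + (2/(N²(N−1)))·(Σ_{1≤i<j≤N} ΔA_{ij})², where ΔA_{ij} = √Var(A_i − A_j). -/
/-!
Write `Var A ψ = ‖(A - ⟨A⟩)ψ‖²`. The deviation vectors `vᵢ = (Aᵢ - ⟨Aᵢ⟩)ψ` are additive in the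
operator, so the claim is an inequality for `N` vectors of a real inner product space. Lagrange's
identity `N ∑ ‖vᵢ‖² = ‖∑ vᵢ‖² + ∑_{i<j} ‖vᵢ - vⱼ‖²` turns it into
`(∑_{i<j} ‖vᵢ - vⱼ‖)² ≤ N(N-1)/2 · ∑_{i<j} ‖vᵢ - vⱼ‖²`, which is Cauchy–Schwarz over the pairs.
-/

open scoped InnerProductSpace BigOperators

noncomputable def Var {H : Type*} [NormedAddCommGroup H] [InnerProductSpace ℂ H]
    (A : H →ₗ[ℂ] H) (ψ : H) : ℝ :=
  (⟪ψ, A (A ψ)⟫_ℂ).re - ((⟪ψ, A ψ⟫_ℂ).re) ^ 2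

open Finset

section PairSums

variable {ι : Type*} [Fintype ι]

lemma sum_sum_norm_sub_sq {E : Type*} [NormedAddCommGroup E] [InnerProductSpace ℝ E]
    (v : ι → E) :
    ∑ i, ∑ j, ‖v i - v j‖ ^ 2 = 2 * (Fintype.card ι * ∑ i, ‖v i‖ ^ 2 - ‖∑ i, v i‖ ^ 2) := by
  have hinner : ∑ i, ∑ j, ⟪v i, v j⟫_ℝ = ‖∑ i, v i‖ ^ 2 := by
    rw [← real_inner_self_eq_norm_sq, sum_inner]
    simp_rw [inner_sum]
  simp_rw [norm_sub_sq_real, sum_add_distrib, sum_sub_distrib, ← mul_sum, hinner]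
  simp only [sum_const, card_univ, nsmul_eq_mul, ← mul_sum]
  ring

variable [LinearOrder ι] [LocallyFiniteOrderTop ι] [LocallyFiniteOrderBot ι]

lemma two_mul_sum_sum_Ioi_eq_sum_sum_compl (f : ι → ι → ℝ) (hf : ∀ i j, f i j = f j i) :
    2 * ∑ i, ∑ j ∈ Ioi i, f i j = ∑ i, ∑ j ∈ {i}ᶜ, f i j := by
  rw [← sum_sum_Ioi_add_eq_sum_sum_off_diag]
  simp_rw [hf _ _, ← two_mul, mul_sum]

lemma card_sigma_Ioi :
    (#(univ.sigma fun i : ι => Ioi i) : ℝ) = Fintype.card ι * (Fintype.card ι - 1) / 2 := by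
  have := two_mul_sum_sum_Ioi_eq_sum_sum_compl (fun (_ _ : ι) => (1 : ℝ)) fun _ _ => rfl
  have hcompl (i : ι) : (#({i}ᶜ : Finset ι) : ℝ) = Fintype.card ι - 1 := by
    have : Nonempty ι := ⟨i⟩
    rw [card_compl, card_singleton, Nat.cast_sub Fintype.card_pos, Nat.cast_one]
  simp only [sum_const, nsmul_eq_mul, mul_one, hcompl, card_univ] at this
  rw [card_sigma, Nat.cast_sum]
  linarith

variable {E : Type*} [NormedAddCommGroup E] [InnerProductSpace ℝ E]

lemma sum_sum_Ioi_norm_sub_sq (v : ι → E) :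
    ∑ i, ∑ j ∈ Ioi i, ‖v i - v j‖ ^ 2 = Fintype.card ι * ∑ i, ‖v i‖ ^ 2 - ‖∑ i, v i‖ ^ 2 := by
  have hdiag (i : ι) : ∑ j ∈ {i}ᶜ, ‖v i - v j‖ ^ 2 = ∑ j, ‖v i - v j‖ ^ 2 := by
    rw [← sum_compl_add_sum {i}]; simp
  have h := two_mul_sum_sum_Ioi_eq_sum_sum_compl (fun i j => ‖v i - v j‖ ^ 2)
    fun i j => by rw [norm_sub_rev]
  simp only [hdiag, sum_sum_norm_sub_sq] at h
  linarith

lemma sq_sum_sum_Ioi_le (f : ι → ι → ℝ) :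
    (∑ i, ∑ j ∈ Ioi i, f i j) ^ 2 ≤
      Fintype.card ι * (Fintype.card ι - 1) / 2 * ∑ i, ∑ j ∈ Ioi i, f i j ^ 2 := by
  simp_rw [sum_sigma', ← card_sigma_Ioi]
  exact sq_sum_le_card_mul_sum_sq

theorem norm_sum_sq_div_card_add_le_sum_norm_sq (hι : 2 ≤ Fintype.card ι) (v : ι → E) :
    1 / (Fintype.card ι : ℝ) * ‖∑ i, v i‖ ^ 2 +
        2 / ((Fintype.card ι : ℝ) ^ 2 * (Fintype.card ι - 1)) *
          (∑ i, ∑ j ∈ Ioi i, ‖v i - v j‖) ^ 2 ≤ ∑ i, ‖v i‖ ^ 2 := by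
  have hpairs := sq_sum_sum_Ioi_le fun i j => ‖v i - v j‖
  rw [sum_sum_Ioi_norm_sub_sq] at hpairs
  have hN : (2 : ℝ) ≤ Fintype.card ι := by exact_mod_cast hι
  set N : ℝ := (Fintype.card ι : ℝ)
  have hN0 : 0 < N := by linarith
  have hN1 : 0 < N - 1 := by linarith
  calc 1 / N * ‖∑ i, v i‖ ^ 2 + 2 / (N ^ 2 * (N - 1)) * (∑ i, ∑ j ∈ Ioi i, ‖v i - v j‖) ^ 2
      ≤ 1 / N * ‖∑ i, v i‖ ^ 2 + 2 / (N ^ 2 * (N - 1)) *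
          (N * (N - 1) / 2 * (N * ∑ i, ‖v i‖ ^ 2 - ‖∑ i, v i‖ ^ 2)) := by
        gcongr
    _ = ∑ i, ‖v i‖ ^ 2 := by
        field_simp
        ring

end PairSums

section Deviation

variable {H : Type*} [NormedAddCommGroup H] [InnerProductSpace ℂ H]

/-- `(X - ⟨X⟩) ψ`; taking the real part of `⟨X⟩` makes it additive in every `X`. -/
noncomputable def deviation (ψ : H) : (H →ₗ[ℂ] H) →+ H where
  toFun X := X ψ - ((⟪ψ, X ψ⟫_ℂ).re : ℂ) • ψ
  map_zero' := by simp
  map_add' X Y := by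
    simp only [LinearMap.add_apply, inner_add_right, Complex.add_re, Complex.ofReal_add, add_smul]
    abel

lemma deviation_apply (ψ : H) (X : H →ₗ[ℂ] H) :
    deviation ψ X = X ψ - ((⟪ψ, X ψ⟫_ℂ).re : ℂ) • ψ := rfl

lemma LinearMap.IsSymmetric.var_eq_norm_deviation_sq {X : H →ₗ[ℂ] H} (hX : X.IsSymmetric)
    {ψ : H} (hψ : ‖ψ‖ = 1) : Var X ψ = ‖deviation ψ X‖ ^ 2 := by
  have hsq : (⟪ψ, X (X ψ)⟫_ℂ).re = ‖X ψ‖ ^ 2 := by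
    rw [← hX]; exact inner_self_eq_norm_sq (𝕜 := ℂ) (X ψ)
  have hcross : RCLike.re ⟪X ψ, ((⟪ψ, X ψ⟫_ℂ).re : ℂ) • ψ⟫_ℂ = (⟪ψ, X ψ⟫_ℂ).re ^ 2 := by
    rw [inner_smul_right, hX]; simp [sq]
  rw [Var, deviation_apply, @norm_sub_sq ℂ, hsq, hcross, norm_smul, hψ]
  simp [sq_abs]
  ring

end Deviation

theorem stmt_2_general {H : Type*} [NormedAddCommGroup H] [InnerProductSpace ℂ H]
    (N : ℕ) (hN : 2 ≤ N) (A : Fin N → H →ₗ[ℂ] H)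
    (hA : ∀ i, (A i).IsSymmetric) (ψ : H) (hψ : ‖ψ‖ = 1) :
    ∑ i : Fin N, Var (A i) ψ ≥
      (1 / (N : ℝ)) * Var (∑ i : Fin N, A i) ψ +
        (2 / ((N : ℝ) ^ 2 * (N - 1))) *
          (∑ i : Fin N, ∑ j ∈ Finset.univ.filter (fun j => i < j),
            Real.sqrt (Var (A i - A j) ψ)) ^ 2 := by
  let _ : InnerProductSpace ℝ H := InnerProductSpace.rclikeToReal ℂ H
  have hsqrt (i j : Fin N) :
      √(Var (A i - A j) ψ) = ‖deviation ψ (A i) - deviation ψ (A j)‖ := by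
    rw [((hA i).sub (hA j)).var_eq_norm_deviation_sq hψ, map_sub, Real.sqrt_sq (norm_nonneg _)]
  simp only [filter_lt_eq_Ioi, hsqrt, (hA _).var_eq_norm_deviation_sq hψ,
    (LinearMap.isSymmetric_sum univ fun i _ => hA i).var_eq_norm_deviation_sq hψ, map_sum]
  simpa using
    norm_sum_sq_div_card_add_le_sum_norm_sq (by simpa using hN) fun i => deviation ψ (A i)

theorem stmt_2 {H : Type*} [NormedAddCommGroup H] [InnerProductSpace ℂ H]
    [FiniteDimensional ℂ H] (N : ℕ) (hN : 2 ≤ N) (A : Fin N → H →ₗ[ℂ] H)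
    (hA : ∀ i, (A i).IsSymmetric) (ψ : H) (hψ : ‖ψ‖ = 1) :
    ∑ i : Fin N, Var (A i) ψ ≥
      (1 / (N : ℝ)) * Var (∑ i : Fin N, A i) ψ +
        (2 / ((N : ℝ) ^ 2 * (N - 1))) *
          (∑ i : Fin N, ∑ j ∈ Finset.univ.filter (fun j => i < j),
            Real.sqrt (Var (A i - A j) ψ)) ^ 2 :=
  stmt_2_general N hN A hA ψ hψ
end

section
/- For arbitrary N≥2 self-adjoint operators A_1,…,A_N and a unit vector ψ, Σ_{i=1}^N Var(A_i) ≥ (1/(2(N−1)))·Σ_{1≤i<j≤N} Var(A_i + A_j). -/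
open scoped InnerProductSpace BigOperators

lemma var_nonneg {H : Type*} [NormedAddCommGroup H] [InnerProductSpace ℂ H]
    {A : H →ₗ[ℂ] H} (hA : A.IsSymmetric) {ψ : H} (hψ : ‖ψ‖ = 1) :
    0 ≤ Var A ψ := by
  have h1 : (⟪ψ, A (A ψ)⟫_ℂ).re = ‖A ψ‖ ^ 2 := by
    rw [← hA ψ (A ψ)]
    rw [inner_self_eq_norm_sq_to_K]; norm_cast
  have h2 : (⟪ψ, A ψ⟫_ℂ).re ^ 2 ≤ ‖A ψ‖ ^ 2 := by
    have := norm_inner_le_norm (𝕜 := ℂ) ψ (A ψ)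
    rw [hψ, one_mul] at this
    have habs : |(⟪ψ, A ψ⟫_ℂ).re| ≤ ‖⟪ψ, A ψ⟫_ℂ‖ := Complex.abs_re_le_norm _
    nlinarith [norm_nonneg (A ψ), abs_nonneg (⟪ψ, A ψ⟫_ℂ).re, sq_abs (⟪ψ, A ψ⟫_ℂ).re]
  simp only [Var, h1]
  linarith

lemma var_pair {H : Type*} [NormedAddCommGroup H] [InnerProductSpace ℂ H]
    (A B : H →ₗ[ℂ] H) (ψ : H) :
    Var (A + B) ψ + Var (A - B) ψ = 2 * Var A ψ + 2 * Var B ψ := by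
  simp only [Var, LinearMap.add_apply, LinearMap.sub_apply, map_add, map_sub,
    inner_add_right, inner_sub_right, Complex.add_re, Complex.sub_re]
  ring

theorem stmt_4 {H : Type*} [NormedAddCommGroup H] [InnerProductSpace ℂ H]
    [FiniteDimensional ℂ H] (N : ℕ) (hN : 2 ≤ N) (A : Fin N → H →ₗ[ℂ] H)
    (hA : ∀ i, (A i).IsSymmetric) (ψ : H) (hψ : ‖ψ‖ = 1) :
    ∑ i : Fin N, Var (A i) ψ ≥
      (1 / (2 * ((N : ℝ) - 1))) *
        ∑ i : Fin N, ∑ j ∈ Finset.univ.filter (fun j => i < j),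
          Var (A i + A j) ψ := by
  have hNpos : (0 : ℝ) < 2 * ((N : ℝ) - 1) := by
    have : (2 : ℝ) ≤ (N : ℝ) := by exact_mod_cast hN
    linarith
  rw [ge_iff_le, one_div, inv_mul_le_iff₀ hNpos]
  -- step 1: bound each pair variance
  have hstep : ∑ i : Fin N, ∑ j ∈ Finset.univ.filter (fun j => i < j), Var (A i + A j) ψ
      ≤ ∑ i : Fin N, ∑ j ∈ Finset.univ.filter (fun j => i < j),
        (2 * Var (A i) ψ + 2 * Var (A j) ψ) := by
    refine Finset.sum_le_sum fun i _ => Finset.sum_le_sum fun j _ => ?_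
    have hnn : 0 ≤ Var (A i - A j) ψ := var_nonneg ((hA i).sub (hA j)) hψ
    have := var_pair (A i) (A j) ψ
    linarith
  refine hstep.trans ?_
  -- step 2: counting
  have hcount : ∑ i : Fin N, ∑ j ∈ Finset.univ.filter (fun j => i < j),
      (2 * Var (A i) ψ + 2 * Var (A j) ψ)
      = 2 * ((N : ℝ) - 1) * ∑ i : Fin N, Var (A i) ψ := by
    have hfil : ∀ i : Fin N, Finset.univ.filter (fun j => i < j) = Finset.Ioi i := by
      intro i; ext j; simp
    simp only [hfil, Finset.sum_add_distrib]
    have hswap : ∑ i : Fin N, ∑ j ∈ Finset.Ioi i, 2 * Var (A j) ψ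
        = ∑ j : Fin N, ∑ i ∈ Finset.Iio j, 2 * Var (A j) ψ := by
      rw [Finset.sum_comm' (s := Finset.univ) (t := fun i => Finset.Ioi i)
        (t' := Finset.univ) (s' := fun j => Finset.Iio j)]
      intro x y; simp
    rw [hswap]
    simp only [Finset.sum_const, nsmul_eq_mul, Fin.card_Ioi, Fin.card_Iio]
    rw [← Finset.sum_add_distrib, Finset.mul_sum]
    refine Finset.sum_congr rfl fun i _ => ?_
    have hi1 : (i : ℕ) ≤ N - 1 := Nat.le_sub_one_of_lt i.isLt
    have hcast : ((N - 1 - (i : ℕ) : ℕ) : ℝ) = (N : ℝ) - 1 - (i : ℕ) := by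
      rw [Nat.cast_sub hi1, Nat.cast_sub (by omega : 1 ≤ N)]
      simp
    rw [hcast]; ring
  rw [hcount]
end

section
/- For arbitrary N≥2 self-adjoint operators A_1,…,A_N and a unit vector ψ, Σ_{i=1}^N Var(A_i) ≥ (1/(2(N−1)))·Σ_{1≤i<j≤N} Var(A_i − A_j). -/
open scoped InnerProductSpace BigOperators

lemma var_sub_add {H : Type*} [NormedAddCommGroup H] [InnerProductSpace ℂ H]
    (A B : H →ₗ[ℂ] H) (ψ : H) :
    Var (A - B) ψ + Var (A + B) ψ = 2 * Var A ψ + 2 * Var B ψ := by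
  simp only [Var, LinearMap.sub_apply, LinearMap.add_apply, map_sub, map_add,
    inner_sub_right, inner_add_right, Complex.sub_re, Complex.add_re]
  ring

theorem stmt_5 {H : Type*} [NormedAddCommGroup H] [InnerProductSpace ℂ H]
    [FiniteDimensional ℂ H] (N : ℕ) (hN : 2 ≤ N) (A : Fin N → H →ₗ[ℂ] H)
    (hA : ∀ i, (A i).IsSymmetric) (ψ : H) (hψ : ‖ψ‖ = 1) :
    ∑ i : Fin N, Var (A i) ψ ≥
      (1 / (2 * ((N : ℝ) - 1))) *
        ∑ i : Fin N, ∑ j ∈ Finset.univ.filter (fun j => i < j),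
          Var (A i - A j) ψ := by
  set v : Fin N → ℝ := fun i => Var (A i) ψ with hv
  have hpair : ∀ i j : Fin N, Var (A i - A j) ψ ≤ 2 * v i + 2 * v j := by
    intro i j
    have h0 := var_nonneg ((hA i).add (hA j)) hψ
    have h1 := var_sub_add (A i) (A j) ψ
    linarith
  have hfilter : ∀ i : Fin N, Finset.univ.filter (fun j => i < j) = Finset.Ioi i := by
    intro i; ext j; simp
  have hsum1 : ∑ i : Fin N, ∑ j ∈ Finset.univ.filter (fun j => i < j), Var (A i - A j) ψ
      ≤ ∑ i : Fin N, ∑ j ∈ Finset.univ.filter (fun j => i < j), (2 * v i + 2 * v j) :=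
    Finset.sum_le_sum fun i _ => Finset.sum_le_sum fun j _ => hpair i j
  have hswap : ∀ f : Fin N → ℝ, ∑ i : Fin N, ∑ j ∈ Finset.Ioi i, f j
      = ∑ j : Fin N, ∑ _i ∈ Finset.Iio j, f j := by
    intro f
    apply Finset.sum_comm'
    intro i j
    simp [and_comm]
  have hcount : ∑ i : Fin N, ∑ j ∈ Finset.univ.filter (fun j => i < j), (2 * v i + 2 * v j)
      = 2 * ((N : ℝ) - 1) * ∑ i : Fin N, v i := by
    simp only [hfilter, Finset.sum_add_distrib]
    rw [hswap (fun j => 2 * v j)]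
    simp only [Finset.sum_const, nsmul_eq_mul, Fin.card_Ioi, Fin.card_Iio]
    rw [← Finset.sum_add_distrib, Finset.mul_sum]
    apply Finset.sum_congr rfl
    intro i _
    have hi : (i : ℕ) ≤ N - 1 := Nat.le_sub_one_of_lt i.isLt
    have : ((N - 1 - (i : ℕ) : ℕ) : ℝ) = (N : ℝ) - 1 - (i : ℕ) := by
      rw [Nat.cast_sub hi, Nat.cast_sub (by omega : 1 ≤ N)]
      simp
    rw [this]
    ring
  have hpos : (0 : ℝ) < 2 * ((N : ℝ) - 1) := by
    have : (2 : ℝ) ≤ (N : ℝ) := by exact_mod_cast hN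
    linarith
  rw [ge_iff_le, one_div, inv_mul_le_iff₀ hpos]
  calc ∑ i : Fin N, ∑ j ∈ Finset.univ.filter (fun j => i < j), Var (A i - A j) ψ
      ≤ 2 * ((N : ℝ) - 1) * ∑ i : Fin N, v i := hsum1.trans_eq hcount
    _ = 2 * ((N : ℝ) - 1) * ∑ i : Fin N, Var (A i) ψ := rfl
end

section
/- For all real x, y, z with x²+y²+z² ≤ 1, the following inequality holds: (1/9)·(√(2−(x−y)²) + √(2−(x−z)²) + √(2−(y−z)²))² + (1/3)·(3 − (x+y+z)²) ≥ (1/2)·(3 − (x²+y²+z²) + xy + xz + yz), i.e., the new uncertainty bound for three Pauli measurements on a qubit dominates the bound (1/4)·Σ_{i<j} Var(σ_i − σ_j). -/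
private lemma cross (a b A B : ℝ) (hA : 0 ≤ A) (hB : 0 ≤ B)
    (hA2 : A ^ 2 = 2 - a) (hB2 : B ^ 2 = 2 - b) (ha : 0 ≤ a) (hb : 0 ≤ b) :
    A * B ≥ 2 - a - b := by
  rcases le_or_gt (2 - a - b) 0 with hc | hc
  · nlinarith [mul_nonneg hA hB]
  · have key : (A * B) ^ 2 ≥ (2 - a - b) ^ 2 := by nlinarith
    nlinarith [mul_nonneg hA hB]

theorem stmt_12 (x y z : ℝ) (h : x ^ 2 + y ^ 2 + z ^ 2 ≤ 1) :
    (1 / 9) * (Real.sqrt (2 - (x - y) ^ 2) + Real.sqrt (2 - (x - z) ^ 2) +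
          Real.sqrt (2 - (y - z) ^ 2)) ^ 2 +
        (1 / 3) * (3 - (x + y + z) ^ 2)
      ≥ (1 / 2) * (3 - (x ^ 2 + y ^ 2 + z ^ 2) + x * y + x * z + y * z) := by
  set A := Real.sqrt (2 - (x - y) ^ 2) with hAdef
  set B := Real.sqrt (2 - (x - z) ^ 2) with hBdef
  set C := Real.sqrt (2 - (y - z) ^ 2) with hCdef
  have hA : 0 ≤ A := Real.sqrt_nonneg _
  have hB : 0 ≤ B := Real.sqrt_nonneg _
  have hC : 0 ≤ C := Real.sqrt_nonneg _
  have h1 : (0:ℝ) ≤ 2 - (x - y) ^ 2 := by nlinarith [sq_nonneg (x + y), sq_nonneg z]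
  have h2 : (0:ℝ) ≤ 2 - (x - z) ^ 2 := by nlinarith [sq_nonneg (x + z), sq_nonneg y]
  have h3 : (0:ℝ) ≤ 2 - (y - z) ^ 2 := by nlinarith [sq_nonneg (y + z), sq_nonneg x]
  have hA2 : A ^ 2 = 2 - (x - y) ^ 2 := Real.sq_sqrt h1
  have hB2 : B ^ 2 = 2 - (x - z) ^ 2 := Real.sq_sqrt h2
  have hC2 : C ^ 2 = 2 - (y - z) ^ 2 := Real.sq_sqrt h3
  have hAB : A * B ≥ 2 - (x - y) ^ 2 - (x - z) ^ 2 :=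
    cross _ _ _ _ hA hB hA2 hB2 (sq_nonneg _) (sq_nonneg _)
  have hAC : A * C ≥ 2 - (x - y) ^ 2 - (y - z) ^ 2 :=
    cross _ _ _ _ hA hC hA2 hC2 (sq_nonneg _) (sq_nonneg _)
  have hBC : B * C ≥ 2 - (x - z) ^ 2 - (y - z) ^ 2 :=
    cross _ _ _ _ hB hC hB2 hC2 (sq_nonneg _) (sq_nonneg _)
  nlinarith [sq_nonneg (x - y), sq_nonneg (x - z), sq_nonneg (y - z), h]
end

section
/- For all real x, y, z with x²+y²+z² ≤ 1, define α = √(2−(x−y)²) + √(2−(x−z)²) + √(2−(y−z)²) and β = √(2−(x+y)²) + √(2−(x+z)²) + √(2−(y+z)²). Then (1/9)α² + (1/3)(3 − (x+y+z)²) ≥ 6 − 2(xy+xz+yz) − 2(x²+y²+z²) − (1/4)β², i.e., the new uncertainty bound dominates the Chen–Fei bound for three Pauli measurements on a qubit. -/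
lemma gnn (u : ℝ) (h0 : 0 ≤ u) (h2 : u ≤ 2) :
    0 ≤ 1 - u/4 - u^2/32 - 3*u^3/64 := by
  nlinarith [mul_nonneg (mul_nonneg h0 h0) (sub_nonneg.2 h2), mul_nonneg h0 (sub_nonneg.2 h2), sq_nonneg u]

lemma sqrt_lb (u : ℝ) (h0 : 0 ≤ u) (h2 : u ≤ 2) :
    Real.sqrt 2 * (1 - u/4 - u^2/32 - 3*u^3/64) ≤ Real.sqrt (2 - u) := by
  have hg := gnn u h0 h2
  have hs2 : (Real.sqrt 2)^2 = 2 := Real.sq_sqrt (by norm_num)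
  have key : (Real.sqrt 2 * (1 - u/4 - u^2/32 - 3*u^3/64))^2 ≤ 2 - u := by
    rw [mul_pow, hs2]
    nlinarith [mul_nonneg (mul_nonneg (mul_nonneg h0 h0) h0) (sub_nonneg.2 h2),
      mul_nonneg (mul_nonneg (mul_nonneg (mul_nonneg h0 h0) h0) h0) (sub_nonneg.2 h2),
      mul_nonneg (mul_nonneg (mul_nonneg (mul_nonneg (mul_nonneg h0 h0) h0) h0) h0) (sub_nonneg.2 h2)]
  nlinarith [Real.sq_sqrt (show (0:ℝ) ≤ 2 - u by linarith), Real.sqrt_nonneg (2-u), key,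
    sq_nonneg (Real.sqrt (2-u) - Real.sqrt 2 * (1 - u/4 - u^2/32 - 3*u^3/64)),
    mul_nonneg (Real.sqrt_nonneg 2) hg]

set_option maxHeartbeats 1000000 in
theorem stmt_13 (x y z : ℝ) (h : x ^ 2 + y ^ 2 + z ^ 2 ≤ 1) :
    (1 / 9) * (Real.sqrt (2 - (x - y) ^ 2) + Real.sqrt (2 - (x - z) ^ 2) +
          Real.sqrt (2 - (y - z) ^ 2)) ^ 2 +
        (1 / 3) * (3 - (x + y + z) ^ 2)
      ≥ 6 - 2 * (x * y + x * z + y * z) - 2 * (x ^ 2 + y ^ 2 + z ^ 2) -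
          (1 / 4) * (Real.sqrt (2 - (x + y) ^ 2) + Real.sqrt (2 - (x + z) ^ 2) +
            Real.sqrt (2 - (y + z) ^ 2)) ^ 2 := by
  have hk : (0:ℝ) ≤ 1 - (x^2+y^2+z^2) := by linarith
  have b1 : (x-y)^2 ≤ 2 := by nlinarith [sq_nonneg (x+y)]
  have b2 : (x-z)^2 ≤ 2 := by nlinarith [sq_nonneg (x+z)]
  have b3 : (y-z)^2 ≤ 2 := by nlinarith [sq_nonneg (y+z)]
  have b4 : (x+y)^2 ≤ 2 := by nlinarith [sq_nonneg (x-y)]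
  have b5 : (x+z)^2 ≤ 2 := by nlinarith [sq_nonneg (x-z)]
  have b6 : (y+z)^2 ≤ 2 := by nlinarith [sq_nonneg (y-z)]
  have A1 := sqrt_lb ((x-y)^2) (sq_nonneg _) b1
  have A2 := sqrt_lb ((x-z)^2) (sq_nonneg _) b2
  have A3 := sqrt_lb ((y-z)^2) (sq_nonneg _) b3
  have B1 := sqrt_lb ((x+y)^2) (sq_nonneg _) b4
  have B2 := sqrt_lb ((x+z)^2) (sq_nonneg _) b5
  have B3 := sqrt_lb ((y+z)^2) (sq_nonneg _) b6
  have g1 := gnn ((x-y)^2) (sq_nonneg _) b1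
  have g2 := gnn ((x-z)^2) (sq_nonneg _) b2
  have g3 := gnn ((y-z)^2) (sq_nonneg _) b3
  have g4 := gnn ((x+y)^2) (sq_nonneg _) b4
  have g5 := gnn ((x+z)^2) (sq_nonneg _) b5
  have g6 := gnn ((y+z)^2) (sq_nonneg _) b6
  have hs2 : (Real.sqrt 2)^2 = 2 := Real.sq_sqrt (by norm_num)
  obtain ⟨G, hGdef⟩ : ∃ G : ℝ, G = (1 - (x-y)^2/4 - ((x-y)^2)^2/32 - 3*((x-y)^2)^3/64)
    + (1 - (x-z)^2/4 - ((x-z)^2)^2/32 - 3*((x-z)^2)^3/64)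
    + (1 - (y-z)^2/4 - ((y-z)^2)^2/32 - 3*((y-z)^2)^3/64) := ⟨_, rfl⟩
  obtain ⟨H, hHdef⟩ : ∃ H : ℝ, H = (1 - (x+y)^2/4 - ((x+y)^2)^2/32 - 3*((x+y)^2)^3/64)
    + (1 - (x+z)^2/4 - ((x+z)^2)^2/32 - 3*((x+z)^2)^3/64)
    + (1 - (y+z)^2/4 - ((y+z)^2)^2/32 - 3*((y+z)^2)^3/64) := ⟨_, rfl⟩
  have hG : 0 ≤ G := by rw [hGdef]; linarith
  have hH : 0 ≤ H := by rw [hHdef]; linarith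
  have hleG : Real.sqrt 2 * G ≤ Real.sqrt (2 - (x - y) ^ 2) + Real.sqrt (2 - (x - z) ^ 2) +
      Real.sqrt (2 - (y - z) ^ 2) := by rw [hGdef]; ring_nf; ring_nf at A1 A2 A3; linarith
  have hleH : Real.sqrt 2 * H ≤ Real.sqrt (2 - (x + y) ^ 2) + Real.sqrt (2 - (x + z) ^ 2) +
      Real.sqrt (2 - (y + z) ^ 2) := by rw [hHdef]; ring_nf; ring_nf at B1 B2 B3; linarith
  have hα : 2*G^2 ≤ (Real.sqrt (2 - (x - y) ^ 2) + Real.sqrt (2 - (x - z) ^ 2) +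
      Real.sqrt (2 - (y - z) ^ 2))^2 := by
    have h0 : 0 ≤ Real.sqrt 2 * G := mul_nonneg (Real.sqrt_nonneg 2) hG
    have h2 := pow_le_pow_left₀ h0 hleG 2
    calc 2*G^2 = (Real.sqrt 2 * G)^2 := by rw [mul_pow, hs2]
    _ ≤ _ := h2
  have hβ : 2*H^2 ≤ (Real.sqrt (2 - (x + y) ^ 2) + Real.sqrt (2 - (x + z) ^ 2) +
      Real.sqrt (2 - (y + z) ^ 2))^2 := by
    have h0 : 0 ≤ Real.sqrt 2 * H := mul_nonneg (Real.sqrt_nonneg 2) hH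
    have h2 := pow_le_pow_left₀ h0 hleH 2
    calc 2*H^2 = (Real.sqrt 2 * H)^2 := by rw [mul_pow, hs2]
    _ ≤ _ := h2
  have hα' : 2*((22/5)*G - 121/25) ≤ (Real.sqrt (2 - (x - y) ^ 2) + Real.sqrt (2 - (x - z) ^ 2) +
      Real.sqrt (2 - (y - z) ^ 2))^2 := by linarith [sq_nonneg (G - 11/5)]
  have hβ' : 2*((22/5)*H - 121/25) ≤ (Real.sqrt (2 - (x + y) ^ 2) + Real.sqrt (2 - (x + z) ^ 2) +
      Real.sqrt (2 - (y + z) ^ 2))^2 := by linarith [sq_nonneg (H - 11/5)]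
  rw [hGdef] at hα'
  rw [hHdef] at hβ'
  linarith [hα', hβ', hk,
    mul_nonneg (sq_nonneg (1-(x^2+y^2+z^2))) (sq_nonneg (x+y+z)),
    pow_nonneg hk 3,
    mul_nonneg hk (by positivity : (0:ℝ) ≤ x^2+y^2+z^2),
    mul_nonneg hk (mul_nonneg (by positivity : (0:ℝ) ≤ x^2+y^2+z^2) (sq_nonneg (x+y+z))),
    mul_nonneg hk (by positivity : (0:ℝ) ≤ x^4+y^4+z^4),
    mul_nonneg hk (by positivity : (0:ℝ) ≤ (x+y)^4+(x+z)^4+(y+z)^4),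
    sq_nonneg (x*y+x*z+y*z),
    mul_nonneg (by positivity : (0:ℝ) ≤ x^2+y^2+z^2) (by positivity : (0:ℝ) ≤ x^2*y^2+x^2*z^2+y^2*z^2),
    mul_nonneg (sq_nonneg (x+y+z)) (sq_nonneg (x*y+x*z+y*z)),
    sq_nonneg ((x+y+z)^3),
    sq_nonneg ((x-y)*(x+y)^2), sq_nonneg ((x-z)*(x+z)^2), sq_nonneg ((y-z)*(y+z)^2),
    sq_nonneg ((x-y)^2*(x+y)), sq_nonneg ((x-z)^2*(x+z)), sq_nonneg ((y-z)^2*(y+z)),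
    sq_nonneg (x*y*z)]
end

section
/- For all real x, y, z with x²+y²+z² ≤ 1, the quantity (1/9)·(√(2−(x−y)²)+√(2−(x−z)²)+√(2−(y−z)²))² + (1/6)(x²+y²+z²) − (7/6)(xy+xz+yz) − 1/2 is strictly positive, with minimum value 1/2 attained at x=y=z=±1/√3. -/
noncomputable def f14 (x y z : ℝ) : ℝ :=
  (1 / 9) * (Real.sqrt (2 - (x - y) ^ 2) + Real.sqrt (2 - (x - z) ^ 2) +
      Real.sqrt (2 - (y - z) ^ 2)) ^ 2 +
    (1 / 6) * (x ^ 2 + y ^ 2 + z ^ 2) - (7 / 6) * (x * y + x * z + y * z) - 1 / 2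

private lemma aux14 (S T : ℝ) (h0 : 0 ≤ S) (h1 : S ≤ 3) (h2 : 0 ≤ T) (h3 : T ≤ S^2) :
    48*T ≤ 72*S + 4*S^2 + 4*S*T + T^2 := by
  nlinarith [mul_nonneg (sub_nonneg.2 h3) (sub_nonneg.2 h1), sq_nonneg T, sq_nonneg S,
    mul_nonneg (mul_nonneg h0 (sub_nonneg.2 h1)) (sub_nonneg.2 h1),
    mul_nonneg (mul_nonneg (mul_nonneg h0 h0) (sub_nonneg.2 h1)) (sub_nonneg.2 h1),
    mul_nonneg h0 (sub_nonneg.2 h3)]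

private lemma sqrtb14 (a : ℝ) (h0 : 0 ≤ a) (h2 : a ≤ 2) :
    Real.sqrt 2 * ((2-a)*(4+a)) / 8 ≤ Real.sqrt (2-a) := by
  have hs2 : (Real.sqrt 2)^2 = 2 := Real.sq_sqrt (by norm_num)
  have hn : (0:ℝ) ≤ Real.sqrt 2 := Real.sqrt_nonneg 2
  have h2a : (0:ℝ) ≤ 2 - a := by linarith
  have hL : 0 ≤ Real.sqrt 2 * ((2-a)*(4+a)) / 8 := by
    have : (0:ℝ) ≤ (2-a)*(4+a) := mul_nonneg h2a (by linarith)
    positivity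
  refine (Real.le_sqrt hL h2a).2 ?_
  have e : (Real.sqrt 2 * ((2-a)*(4+a)) / 8)^2 = (2-a)^2*(4+a)^2/32 := by
    rw [div_pow, mul_pow, hs2]; ring
  rw [e]
  nlinarith [mul_nonneg (mul_nonneg h2a (sq_nonneg a)) (show (0:ℝ) ≤ 6+a by linarith)]

set_option maxHeartbeats 1000000 in
private lemma main14 (x y z : ℝ) (hq : x ^ 2 + y ^ 2 + z ^ 2 ≤ 1) : 1 / 2 ≤ f14 x y z := by
  obtain ⟨a, ha⟩ : ∃ a, a = (x - y)^2 := ⟨_, rfl⟩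
  obtain ⟨b, hb⟩ : ∃ b, b = (x - z)^2 := ⟨_, rfl⟩
  obtain ⟨c, hc⟩ : ∃ c, c = (y - z)^2 := ⟨_, rfl⟩
  have h0a : 0 ≤ a := ha ▸ sq_nonneg _
  have h0b : 0 ≤ b := hb ▸ sq_nonneg _
  have h0c : 0 ≤ c := hc ▸ sq_nonneg _
  have h2a : a ≤ 2 := by rw [ha]; nlinarith [sq_nonneg (x+y), sq_nonneg z]
  have h2b : b ≤ 2 := by rw [hb]; nlinarith [sq_nonneg (x+z), sq_nonneg y]
  have h2c : c ≤ 2 := by rw [hc]; nlinarith [sq_nonneg (y+z), sq_nonneg x]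
  have hs2 : (Real.sqrt 2)^2 = 2 := Real.sq_sqrt (by norm_num)
  have hn : (0:ℝ) ≤ Real.sqrt 2 := Real.sqrt_nonneg 2
  obtain ⟨M, hM⟩ : ∃ M, M = (2-a)*(4+a) + (2-b)*(4+b) + (2-c)*(4+c) := ⟨_, rfl⟩
  have hM0 : 0 ≤ M := by
    have t1 := mul_nonneg (by linarith : (0:ℝ) ≤ 2-a) (by linarith : (0:ℝ) ≤ 4+a)
    have t2 := mul_nonneg (by linarith : (0:ℝ) ≤ 2-b) (by linarith : (0:ℝ) ≤ 4+b)
    have t3 := mul_nonneg (by linarith : (0:ℝ) ≤ 2-c) (by linarith : (0:ℝ) ≤ 4+c)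
    rw [hM]; linarith
  obtain ⟨P, hP⟩ : ∃ P, P = Real.sqrt (2 - a) + Real.sqrt (2 - b) + Real.sqrt (2 - c) := ⟨_, rfl⟩
  have hPM : Real.sqrt 2 * M / 8 ≤ P := by
    have t1 := sqrtb14 a h0a h2a
    have t2 := sqrtb14 b h0b h2b
    have t3 := sqrtb14 c h0c h2c
    rw [hP, hM]; ring_nf; ring_nf at t1 t2 t3; linarith
  have hQ0 : 0 ≤ Real.sqrt 2 * M / 8 := by have := Real.sqrt_nonneg 2; positivity
  have hP2 : M^2/32 ≤ P^2 := by
    have h := pow_le_pow_left₀ hQ0 hPM 2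
    have e : (Real.sqrt 2 * M / 8)^2 = M^2/32 := by
      rw [div_pow, mul_pow, hs2]; ring
    linarith [e ▸ h]
  -- key polynomial inequality
  obtain ⟨S, hS⟩ : ∃ S, S = a + b + c := ⟨_, rfl⟩
  obtain ⟨T, hT⟩ : ∃ T, T = a^2 + b^2 + c^2 := ⟨_, rfl⟩
  have hS0 : 0 ≤ S := by rw [hS]; linarith
  have hS3 : S ≤ 3 := by
    rw [hS, ha, hb, hc]; nlinarith [sq_nonneg (x+y+z)]
  have hTS : T ≤ S^2 := by
    rw [hT, hS]; nlinarith [mul_nonneg h0a h0b, mul_nonneg h0a h0c, mul_nonneg h0b h0c]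
  have haux := aux14 S T hS0 hS3 (by rw [hT]; positivity) hTS
  have hMe : M = 24 - 2*S - T := by rw [hM, hS, hT]; ring
  have hkey : 288 - 48*(x^2+y^2+z^2) + 336*(x*y+x*z+y*z) ≤ M^2 := by
    have h1 : 576 - 168*S ≤ M^2 := by rw [hMe]; nlinarith [haux]
    have h2 : 288 - 48*(x^2+y^2+z^2) + 336*(x*y+x*z+y*z) ≤ 576 - 168*S := by
      rw [hS, ha, hb, hc]; nlinarith [hq]
    linarith
  -- conclude
  have : f14 x y z = (1/9) * P^2 + (1/6)*(x^2+y^2+z^2) - (7/6)*(x*y+x*z+y*z) - 1/2 := by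
    rw [f14, hP, ha, hb, hc]
  rw [this]
  nlinarith [hP2, hkey]

theorem stmt_14 :
    (∀ x y z : ℝ, x ^ 2 + y ^ 2 + z ^ 2 ≤ 1 → 1 / 2 ≤ f14 x y z)
      ∧ f14 (1 / Real.sqrt 3) (1 / Real.sqrt 3) (1 / Real.sqrt 3) = 1 / 2
      ∧ f14 (-(1 / Real.sqrt 3)) (-(1 / Real.sqrt 3)) (-(1 / Real.sqrt 3)) = 1 / 2 := by
  have hs2 : (Real.sqrt 2)^2 = 2 := Real.sq_sqrt (by norm_num)
  have hs3 : (Real.sqrt 3)^2 = 3 := Real.sq_sqrt (by norm_num)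
  have h3pos : (0:ℝ) < Real.sqrt 3 := Real.sqrt_pos.2 (by norm_num)
  have heq : ∀ t : ℝ, t^2 = 1/3 → f14 t t t = 1/2 := by
    intro t ht
    have : (t - t)^2 = 0 := by ring
    rw [f14, this]
    norm_num
    rw [show Real.sqrt 2 + Real.sqrt 2 + Real.sqrt 2 = 3 * Real.sqrt 2 by ring]
    rw [mul_pow, hs2]
    nlinarith [ht]
  have ht1 : (1 / Real.sqrt 3)^2 = 1/3 := by
    rw [div_pow, hs3]; norm_num
  refine ⟨fun x y z h => main14 x y z h, heq _ ht1, heq _ (by rw [neg_pow]; simp [ht1])⟩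
end

section
/- For N≥3 self-adjoint operators A_1,…,A_N and unit vector ψ, the uncertainty relation Σ_i Var(A_i) ≥ (1/N)Var(Σ_i A_i) + (2/(N²(N−1)))(Σ_{i<j} Δ(A_i−A_j))² is equivalent to Σ_i Var(A_i) ≥ (1/(N−1))·Σ_{i<j}[⟨{A_i,A_j}⟩ − 2⟨A_i⟩⟨A_j⟩] + (2/((N−2)(N²−1)))·Σ_{(i,j)≠(i',j')} Δ(A_i−A_j)Δ(A_{i'}−A_{j'}), where the last sum is over ordered pairs of distinct index pairs. -/
/-!
Write `S = Σ Var(A_i)`, `C = Σ_{i<j} (⟨{A_i,A_j}⟩ - 2⟨A_i⟩⟨A_j⟩)` and `P = Σ_{i<j} Δ(A_i - A_j)`.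
Expanding variances gives `Var(Σ A_i) = S + C` and `Σ_{i<j} Δ(A_i - A_j)² = (N - 1) S - C`, and the
sum over ordered pairs of distinct index pairs is `P² - Σ_{i<j} Δ(A_i - A_j)²`. Both inequalities
thus only involve `S`, `C`, `P²`, and the slack of the second one is `N² / ((N - 2)(N + 1)) > 0`
times the slack of the first.
-/

open scoped InnerProductSpace BigOperators

open Finset

section PairSums

variable {ι : Type*} [Fintype ι] [LinearOrder ι]

theorem sum_sum_eq_sum_diag_add_sum_lt {M : Type*} [AddCommMonoid M] (f : ι → ι → M) :
    ∑ i, ∑ j, f i j =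
      ∑ i, f i i + ∑ p ∈ univ.filter (fun p : ι × ι => p.1 < p.2), (f p.1 p.2 + f p.2 p.1) := by
  have hsplit : ∀ i j, f i j = (if i = j then f i j else 0) +
      ((if i < j then f i j else 0) + (if j < i then f i j else 0)) := by
    intro i j
    rcases lt_trichotomy i j with h | rfl | h
    · simp [h, h.ne, h.not_gt]
    · simp
    · simp [h, h.ne', h.not_gt]
  have hswap : ∑ i, ∑ j, (if j < i then f i j else 0) = ∑ i, ∑ j, (if i < j then f j i else 0) :=
    sum_comm
  rw [sum_filter, Fintype.sum_prod_type]
  simp only [ite_add_zero]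
  conv_lhs => enter [2, i, 2, j]; rw [hsplit i j]
  simp only [sum_add_distrib, sum_ite_eq, mem_univ, if_true, hswap]

theorem sum_filter_lt_add {R : Type*} [CommRing R] (v : ι → R) :
    ∑ p ∈ univ.filter (fun p : ι × ι => p.1 < p.2), (v p.1 + v p.2) =
      ((Fintype.card ι : R) - 1) * ∑ i, v i := by
  have h := sum_sum_eq_sum_diag_add_sum_lt (fun i (_ : ι) => v i)
  simp only [sum_const, card_univ, nsmul_eq_mul, ← mul_sum] at h
  linear_combination -h

end PairSums

theorem sum_sum_erase_mul {α R : Type*} [DecidableEq α] [CommRing R] (s : Finset α)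
    (d : α → R) :
    ∑ p ∈ s, ∑ q ∈ s.erase p, d p * d q = (∑ p ∈ s, d p) ^ 2 - ∑ p ∈ s, d p ^ 2 := by
  calc ∑ p ∈ s, ∑ q ∈ s.erase p, d p * d q
      = ∑ p ∈ s, (d p * ∑ q ∈ s, d q - d p ^ 2) := by
        refine sum_congr rfl fun p hp => ?_
        rw [← mul_sum, sum_erase_eq_sub hp, mul_sub, sq]
    _ = (∑ p ∈ s, d p) ^ 2 - ∑ p ∈ s, d p ^ 2 := by
        rw [sum_sub_distrib, ← sum_mul, sq]

theorem real_uncertainty_iff (n S C P : ℝ) (hn : 2 < n) :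
    S ≥ 1 / n * (S + C) + 2 / (n ^ 2 * (n - 1)) * P ^ 2 ↔
      S ≥ 1 / (n - 1) * C + 2 / ((n - 2) * (n ^ 2 - 1)) * (P ^ 2 - ((n - 1) * S - C)) := by
  have h2 : 0 < n - 2 := by linarith
  have h1 : 0 < n - 1 := by linarith
  have hsq : n ^ 2 - 1 = (n - 1) * (n + 1) := by ring
  have key : S - (1 / (n - 1) * C + 2 / ((n - 2) * (n ^ 2 - 1)) * (P ^ 2 - ((n - 1) * S - C))) =
      n ^ 2 / ((n - 2) * (n + 1)) * (S - (1 / n * (S + C) + 2 / (n ^ 2 * (n - 1)) * P ^ 2)) := by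
    rw [hsq]
    field_simp
    ring
  rw [ge_iff_le, ge_iff_le, ← sub_nonneg (a := S), ← sub_nonneg (a := S), key,
    mul_nonneg_iff_of_pos_left (by positivity)]

section Variance

variable {H : Type*} [NormedAddCommGroup H] [InnerProductSpace ℂ H]

/-- `⟨{A, B}⟩ - 2⟨A⟩⟨B⟩`: twice the symmetrized covariance. -/
noncomputable def anticommCov (A B : H →ₗ[ℂ] H) (ψ : H) : ℝ :=
  (⟪ψ, (A ∘ₗ B + B ∘ₗ A) ψ⟫_ℂ).re - 2 * (⟪ψ, A ψ⟫_ℂ).re * (⟪ψ, B ψ⟫_ℂ).re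

theorem var_nonneg_s15 {B : H →ₗ[ℂ] H} (hB : B.IsSymmetric) {ψ : H} (hψ : ‖ψ‖ = 1) :
    0 ≤ Var B ψ := by
  have hsq : (⟪ψ, B (B ψ)⟫_ℂ).re = ‖B ψ‖ ^ 2 := by
    rw [← hB ψ (B ψ), ← inner_self_eq_norm_sq (𝕜 := ℂ)]
    rfl
  have hmean : |(⟪ψ, B ψ⟫_ℂ).re| ≤ ‖B ψ‖ :=
    calc |(⟪ψ, B ψ⟫_ℂ).re| ≤ ‖⟪ψ, B ψ⟫_ℂ‖ := Complex.abs_re_le_norm _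
      _ ≤ ‖ψ‖ * ‖B ψ‖ := norm_inner_le_norm _ _
      _ = ‖B ψ‖ := by rw [hψ, one_mul]
  rw [Var, hsq, sub_nonneg, ← sq_abs]
  exact pow_le_pow_left₀ (abs_nonneg _) hmean 2

theorem var_sub (A B : H →ₗ[ℂ] H) (ψ : H) :
    Var (A - B) ψ = Var A ψ + Var B ψ - anticommCov A B ψ := by
  simp only [Var, anticommCov, LinearMap.sub_apply, LinearMap.add_apply, LinearMap.comp_apply,
    map_sub, inner_sub_right, inner_add_right, Complex.sub_re, Complex.add_re]
  ring

theorem var_sum {ι : Type*} [Fintype ι] [LinearOrder ι] (A : ι → H →ₗ[ℂ] H) (ψ : H) :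
    Var (∑ i, A i) ψ = ∑ i, Var (A i) ψ +
      ∑ p ∈ univ.filter (fun p : ι × ι => p.1 < p.2), anticommCov (A p.1) (A p.2) ψ := by
  have hexpand : Var (∑ i, A i) ψ =
      ∑ i, ∑ j, ((⟪ψ, A j (A i ψ)⟫_ℂ).re - (⟪ψ, A i ψ⟫_ℂ).re * (⟪ψ, A j ψ⟫_ℂ).re) := by
    simp only [Var, LinearMap.sum_apply, map_sum, inner_sum, Complex.re_sum, sq,
      sum_mul_sum, ← sum_sub_distrib]
  rw [hexpand, sum_sum_eq_sum_diag_add_sum_lt]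
  simp only [Var, anticommCov, LinearMap.add_apply, LinearMap.comp_apply, inner_add_right,
    Complex.add_re, sq]
  congr 1
  exact sum_congr rfl fun p _ => by ring

theorem sum_var_sub_filter_lt {ι : Type*} [Fintype ι] [LinearOrder ι] (A : ι → H →ₗ[ℂ] H)
    (ψ : H) :
    ∑ p ∈ univ.filter (fun p : ι × ι => p.1 < p.2), Var (A p.1 - A p.2) ψ =
      ((Fintype.card ι : ℝ) - 1) * ∑ i, Var (A i) ψ -
        ∑ p ∈ univ.filter (fun p : ι × ι => p.1 < p.2), anticommCov (A p.1) (A p.2) ψ := by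
  simp only [var_sub, sum_sub_distrib]
  rw [sum_filter_lt_add (fun i => Var (A i) ψ)]

end Variance

theorem stmt_15_general {H : Type*} [NormedAddCommGroup H] [InnerProductSpace ℂ H]
    (N : ℕ) (hN : 3 ≤ N) (A : Fin N → H →ₗ[ℂ] H)
    (hA : ∀ i, (A i).IsSymmetric) (ψ : H) (hψ : ‖ψ‖ = 1) :
    (∑ i : Fin N, Var (A i) ψ ≥
        (1 / (N : ℝ)) * Var (∑ i : Fin N, A i) ψ +
          (2 / ((N : ℝ) ^ 2 * (N - 1))) *
            (∑ p ∈ Finset.univ.filter (fun p : Fin N × Fin N => p.1 < p.2),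
              Real.sqrt (Var (A p.1 - A p.2) ψ)) ^ 2)
      ↔ (∑ i : Fin N, Var (A i) ψ ≥
          (1 / ((N : ℝ) - 1)) *
            ∑ p ∈ Finset.univ.filter (fun p : Fin N × Fin N => p.1 < p.2),
              ((⟪ψ, (A p.1 ∘ₗ A p.2 + A p.2 ∘ₗ A p.1) ψ⟫_ℂ).re -
                2 * (⟪ψ, A p.1 ψ⟫_ℂ).re * (⟪ψ, A p.2 ψ⟫_ℂ).re) +
          (2 / (((N : ℝ) - 2) * ((N : ℝ) ^ 2 - 1))) *
            ∑ p ∈ Finset.univ.filter (fun p : Fin N × Fin N => p.1 < p.2),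
              ∑ q ∈ Finset.univ.filter
                  (fun q : Fin N × Fin N => q.1 < q.2 ∧ q ≠ p),
                Real.sqrt (Var (A p.1 - A p.2) ψ) *
                  Real.sqrt (Var (A q.1 - A q.2) ψ)) := by
  have hfilter : ∀ p : Fin N × Fin N,
      univ.filter (fun q : Fin N × Fin N => q.1 < q.2 ∧ q ≠ p) =
        (univ.filter fun q : Fin N × Fin N => q.1 < q.2).erase p := fun p => by
    rw [← filter_filter, filter_ne']
  have hsqrt : ∀ p : Fin N × Fin N,
      √(Var (A p.1 - A p.2) ψ) ^ 2 = Var (A p.1 - A p.2) ψ := fun p =>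
    Real.sq_sqrt (var_nonneg_s15 ((hA p.1).sub (hA p.2)) hψ)
  simp only [hfilter, sum_sum_erase_mul, hsqrt, ← anticommCov.eq_1]
  rw [var_sum, sum_var_sub_filter_lt, Fintype.card_fin]
  exact real_uncertainty_iff _ _ _ _ (by exact_mod_cast (show 2 < N by omega))

theorem stmt_15 {H : Type*} [NormedAddCommGroup H] [InnerProductSpace ℂ H]
    [FiniteDimensional ℂ H] (N : ℕ) (hN : 3 ≤ N) (A : Fin N → H →ₗ[ℂ] H)
    (hA : ∀ i, (A i).IsSymmetric) (ψ : H) (hψ : ‖ψ‖ = 1) :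
    (∑ i : Fin N, Var (A i) ψ ≥
        (1 / (N : ℝ)) * Var (∑ i : Fin N, A i) ψ +
          (2 / ((N : ℝ) ^ 2 * (N - 1))) *
            (∑ p ∈ Finset.univ.filter (fun p : Fin N × Fin N => p.1 < p.2),
              Real.sqrt (Var (A p.1 - A p.2) ψ)) ^ 2)
      ↔ (∑ i : Fin N, Var (A i) ψ ≥
          (1 / ((N : ℝ) - 1)) *
            ∑ p ∈ Finset.univ.filter (fun p : Fin N × Fin N => p.1 < p.2),
              ((⟪ψ, (A p.1 ∘ₗ A p.2 + A p.2 ∘ₗ A p.1) ψ⟫_ℂ).re -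
                2 * (⟪ψ, A p.1 ψ⟫_ℂ).re * (⟪ψ, A p.2 ψ⟫_ℂ).re) +
          (2 / (((N : ℝ) - 2) * ((N : ℝ) ^ 2 - 1))) *
            ∑ p ∈ Finset.univ.filter (fun p : Fin N × Fin N => p.1 < p.2),
              ∑ q ∈ Finset.univ.filter
                  (fun q : Fin N × Fin N => q.1 < q.2 ∧ q ≠ p),
                Real.sqrt (Var (A p.1 - A p.2) ψ) *
                  Real.sqrt (Var (A q.1 - A q.2) ψ)) :=
  stmt_15_general N hN A hA ψ hψ
end

section
/- If ψ is a unit vector that is not a common eigenvector of all N self-adjoint operators A_1,…,A_N, then the lower bound (1/N)·Var(Σ_i A_i) + (2/(N²(N−1)))·(Σ_{i<j} Δ(A_i−A_j))² is strictly positive. -/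
open scoped InnerProductSpace BigOperators

lemma var_eq_norm_sq {H : Type*} [NormedAddCommGroup H] [InnerProductSpace ℂ H]
    (A : H →ₗ[ℂ] H) (hA : A.IsSymmetric) (ψ : H) (hψ : ‖ψ‖ = 1) :
    Var A ψ = ‖A ψ - (((⟪ψ, A ψ⟫_ℂ).re : ℝ) : ℂ) • ψ‖ ^ 2 := by
  set c : ℝ := (⟪ψ, A ψ⟫_ℂ).re with hc
  have h1 : (⟪ψ, A (A ψ)⟫_ℂ).re = ‖A ψ‖ ^ 2 := by
    rw [← hA ψ (A ψ)]
    exact_mod_cast @inner_self_eq_norm_sq ℂ _ _ _ _ (A ψ)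
  have h2 : (⟪A ψ, ψ⟫_ℂ).re = c := by rw [hA ψ ψ]
  have h3 : ‖A ψ - ((c : ℂ)) • ψ‖ ^ 2
      = ‖A ψ‖ ^ 2 - 2 * (⟪A ψ, (c : ℂ) • ψ⟫_ℂ).re + ‖(c : ℂ) • ψ‖ ^ 2 := by
    exact_mod_cast @norm_sub_sq ℂ _ _ _ _ (A ψ) ((c : ℂ) • ψ)
  have h4 : (⟪A ψ, (c : ℂ) • ψ⟫_ℂ).re = c * c := by
    rw [inner_smul_right]
    simp [h2, Complex.mul_re]
  have h5 : ‖(c : ℂ) • ψ‖ ^ 2 = c ^ 2 := by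
    rw [norm_smul, hψ]
    simp [abs_sq, sq_abs]
  rw [Var, h1, h3, h4, h5]
  ring

lemma var_zero_eigen {H : Type*} [NormedAddCommGroup H] [InnerProductSpace ℂ H]
    (A : H →ₗ[ℂ] H) (hA : A.IsSymmetric) (ψ : H) (hψ : ‖ψ‖ = 1)
    (h : Var A ψ = 0) : ∃ μ : ℂ, A ψ = μ • ψ := by
  rw [var_eq_norm_sq A hA ψ hψ] at h
  have := pow_eq_zero_iff (n := 2) (by norm_num) |>.mp h
  refine ⟨(((⟪ψ, A ψ⟫_ℂ).re : ℝ) : ℂ), ?_⟩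
  rw [← sub_eq_zero]
  simpa using norm_eq_zero.mp this

theorem stmt_16 {H : Type*} [NormedAddCommGroup H] [InnerProductSpace ℂ H]
    [FiniteDimensional ℂ H] (N : ℕ) (hN : 2 ≤ N) (A : Fin N → H →ₗ[ℂ] H)
    (hA : ∀ i, (A i).IsSymmetric) (ψ : H) (hψ : ‖ψ‖ = 1)
    (hcommon : ¬ ∀ i : Fin N, ∃ μ : ℂ, A i ψ = μ • ψ) :
    0 < (1 / (N : ℝ)) * Var (∑ i : Fin N, A i) ψ +
        (2 / ((N : ℝ) ^ 2 * (N - 1))) *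
          (∑ i : Fin N, ∑ j ∈ Finset.univ.filter (fun j => i < j),
            Real.sqrt (Var (A i - A j) ψ)) ^ 2 := by
  have hNR : (2:ℝ) ≤ (N:ℝ) := by exact_mod_cast hN
  have hN0 : (0:ℝ) < N := by linarith
  have hN1 : (0:ℝ) < (N:ℝ) - 1 := by linarith
  have hSsym : (∑ i : Fin N, A i).IsSymmetric := by
    intro x y
    simp only [LinearMap.sum_apply, sum_inner, inner_sum]
    exact Finset.sum_congr rfl fun i _ => hA i x y
  have hsub : ∀ i j : Fin N, (A i - A j).IsSymmetric := by
    intro i j x y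
    simp only [LinearMap.sub_apply, inner_sub_left, inner_sub_right, hA i x y, hA j x y]
  have hVarS : 0 ≤ Var (∑ i : Fin N, A i) ψ := by
    rw [var_eq_norm_sq _ hSsym ψ hψ]; positivity
  have hVarsub : ∀ i j, 0 ≤ Var (A i - A j) ψ := fun i j => by
    rw [var_eq_norm_sq _ (hsub i j) ψ hψ]; positivity
  by_contra hcon
  push_neg at hcon
  have hsumnn : 0 ≤ ∑ i : Fin N, ∑ j ∈ Finset.univ.filter (fun j => i < j),
      Real.sqrt (Var (A i - A j) ψ) := by positivity
  have h1 : 0 ≤ (1 / (N : ℝ)) * Var (∑ i : Fin N, A i) ψ := by positivity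
  have hcoef : 0 < 2 / ((N : ℝ) ^ 2 * (N - 1)) := by positivity
  have h2 : 0 ≤ (2 / ((N : ℝ) ^ 2 * (N - 1))) *
      (∑ i : Fin N, ∑ j ∈ Finset.univ.filter (fun j => i < j),
        Real.sqrt (Var (A i - A j) ψ)) ^ 2 := by positivity
  have ha : (1 / (N : ℝ)) * Var (∑ i : Fin N, A i) ψ = 0 := le_antisymm (by linarith) h1
  have hz1 : Var (∑ i : Fin N, A i) ψ = 0 := by
    rcases mul_eq_zero.mp ha with h | h
    · exact absurd h (by positivity)
    · exact h
  have hb : (2 / ((N : ℝ) ^ 2 * (N - 1))) *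
      (∑ i : Fin N, ∑ j ∈ Finset.univ.filter (fun j => i < j),
        Real.sqrt (Var (A i - A j) ψ)) ^ 2 = 0 := le_antisymm (by linarith) h2
  have hsum0 : (∑ i : Fin N, ∑ j ∈ Finset.univ.filter (fun j => i < j),
      Real.sqrt (Var (A i - A j) ψ)) = 0 := by
    rcases mul_eq_zero.mp hb with h | h
    · exact absurd h hcoef.ne'
    · exact pow_eq_zero_iff (by norm_num) |>.mp h
  -- each sqrt term is zero
  have hterm : ∀ i j : Fin N, i < j → Var (A i - A j) ψ = 0 := by
    intro i j hij
    have h := (Finset.sum_eq_zero_iff_of_nonneg (fun i _ => by positivity)).mp hsum0 i (Finset.mem_univ i)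
    have h2' := (Finset.sum_eq_zero_iff_of_nonneg (fun j _ => Real.sqrt_nonneg _)).mp h j (by simp [hij])
    have := Real.sqrt_eq_zero'.mp h2'
    exact le_antisymm this (hVarsub i j)
  -- eigenvector statements
  obtain ⟨lam, hlam⟩ := var_zero_eigen _ hSsym ψ hψ hz1
  have heig : ∀ i j : Fin N, ∃ μ : ℂ, (A i - A j) ψ = μ • ψ := by
    intro i j
    rcases lt_trichotomy i j with h | h | h
    · exact var_zero_eigen _ (hsub i j) ψ hψ (hterm i j h)
    · exact ⟨0, by simp [h]⟩
    · obtain ⟨μ, hμ⟩ := var_zero_eigen _ (hsub j i) ψ hψ (hterm j i h)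
      refine ⟨-μ, ?_⟩
      have : (A i - A j) ψ = -((A j - A i) ψ) := by simp [LinearMap.sub_apply]
      rw [this, hμ, neg_smul]
  choose μ hμ using heig
  apply hcommon
  intro i
  refine ⟨(lam + ∑ j : Fin N, μ i j) / N, ?_⟩
  have key : (N : ℂ) • A i ψ = (lam + ∑ j : Fin N, μ i j) • ψ := by
    have e1 : ∑ j : Fin N, ((A i - A j) ψ) = (N : ℂ) • A i ψ - (∑ j : Fin N, A j) ψ := by
      simp only [LinearMap.sub_apply, Finset.sum_sub_distrib, Finset.sum_const,
        Finset.card_univ, Fintype.card_fin, LinearMap.sum_apply]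
      rw [Nat.cast_smul_eq_nsmul]
    have e2 : ∑ j : Fin N, ((A i - A j) ψ) = (∑ j : Fin N, μ i j) • ψ := by
      rw [Finset.sum_congr rfl fun j _ => hμ i j, ← Finset.sum_smul]
    rw [e2] at e1
    rw [eq_comm, sub_eq_iff_eq_add] at e1
    rw [e1, hlam, add_smul, add_comm]
  have hNc : (N : ℂ) ≠ 0 := Nat.cast_ne_zero.mpr (by omega)
  rw [div_eq_mul_inv, mul_comm, mul_smul]
  rw [← key, inv_smul_smul₀ hNc]
end
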